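/- If V has dimension n over 𝔽₂, then for every integer q with 0 ≤ q ≤ n the 𝔽₂-vector space I^q/I^{q+1} has dimension equal to the binomial coefficient C(n, q); moreover I^{n+1} = 0. -/

import Mathlib

open AddMonoidAlgebra

/-- The canonical basis element `[v]` of the group algebra `𝔽₂[V]` of the additive group `V`. -/
noncomputable def ga {V : Type*} [AddCommMonoid V] (v : V) :
    AddMonoidAlgebra (ZMod 2) V :=
  AddMonoidAlgebra.single v 1

/-- The fundamental class `[H] = ∑_{v ∈ H} [v] ∈ 𝔽₂[V]` of a linear subspace `H ⊆ V`. -/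
noncomputable def fundClass {V : Type*} [AddCommGroup V] [Module (ZMod 2) V]
    (H : Submodule (ZMod 2) V) : AddMonoidAlgebra (ZMod 2) V :=
  ∑ᶠ v ∈ (H : Set V), ga v

/-- The augmentation map `μ : 𝔽₂[V] → 𝔽₂`, sending each `[v]` to `1`. -/
noncomputable def aug (V : Type*) [AddCommMonoid V] :
    AddMonoidAlgebra (ZMod 2) V →ₐ[ZMod 2] ZMod 2 :=
  AddMonoidAlgebra.lift (ZMod 2) (ZMod 2) V 1

/-- The augmentation ideal `I ⊆ 𝔽₂[V]`, i.e. the kernel of the augmentation map. -/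
noncomputable def augIdeal (V : Type*) [AddCommMonoid V] :
    Ideal (AddMonoidAlgebra (ZMod 2) V) :=
  RingHom.ker (aug V).toRingHom


/-!
Choose a basis `b₁, …, bₙ` of `V` and put `xᵢ = [bᵢ] + 1 ∈ I`. In characteristic two
`xᵢ² = [2bᵢ] + 1 = 0`, so the products `x_S = ∏_{i ∈ S} xᵢ` over subsets `S` are closed under
multiplication up to zero. They span `𝔽₂[V]`, since `[∑_{i ∈ T} bᵢ] = ∏_{i ∈ T} (xᵢ + 1)`, and there
are `2ⁿ = dim 𝔽₂[V]` of them, so they form a basis. The `x_S` with `|S| ≥ q` span `I^q`: they lie in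
it, they span `I` (a combination of the `x_S` has augmentation equal to its coefficient of
`x_∅ = 1`), and they are closed under multiplication. Hence `I^q / I^{q+1}` has a basis indexed
by the `q`-subsets, and `I^{n+1} = 0`.
-/

section GroupLike

variable {V : Type*} [AddCommMonoid V]

lemma ga_zero : ga (0 : V) = 1 := rfl

lemma ga_add (v w : V) : ga (v + w) = ga v * ga w := by
  simp [ga, AddMonoidAlgebra.single_mul_single]

lemma aug_ga (v : V) : aug V (ga v) = 1 := by
  simp [aug, ga, AddMonoidAlgebra.lift_single]

lemma ga_add_one_mem_augIdeal (v : V) : ga v + 1 ∈ augIdeal V := by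
  change aug V (ga v + 1) = 0
  rw [map_add, aug_ga, map_one]
  decide

lemma span_range_ga : Submodule.span (ZMod 2) (Set.range (ga (V := V))) = ⊤ :=
  (AddMonoidAlgebra.basis V (ZMod 2)).span_eq

end GroupLike

section Monomials

variable {V ι : Type*} [AddCommMonoid V]

noncomputable def augMonomial (b : ι → V) (S : Finset ι) : AddMonoidAlgebra (ZMod 2) V :=
  ∏ i ∈ S, (ga (b i) + 1)

noncomputable def augMonomialSpan (b : ι → V) (q : ℕ) :
    Submodule (ZMod 2) (AddMonoidAlgebra (ZMod 2) V) :=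
  Submodule.span (ZMod 2) (augMonomial b '' {S | q ≤ S.card})

variable (b : ι → V)

lemma augMonomial_empty : augMonomial b ∅ = 1 := Finset.prod_empty

lemma augMonomial_union [DecidableEq ι] {S T : Finset ι} (h : Disjoint S T) :
    augMonomial b (S ∪ T) = augMonomial b S * augMonomial b T :=
  Finset.prod_union h

lemma augMonomial_mem_pow (S : Finset ι) : augMonomial b S ∈ augIdeal V ^ S.card := by
  rw [← Finset.prod_const]
  exact Ideal.prod_mem_prod fun i _ ↦ ga_add_one_mem_augIdeal (b i)

lemma augMonomialSpan_le_augIdeal_pow (q : ℕ) :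
    augMonomialSpan b q ≤ (augIdeal V ^ q).restrictScalars (ZMod 2) :=
  Submodule.span_le.mpr <| by
    rintro _ ⟨S, hS, rfl⟩
    exact Ideal.pow_le_pow_right hS (augMonomial_mem_pow b S)

lemma one_mem_augMonomialSpan_zero : 1 ∈ augMonomialSpan b 0 :=
  Submodule.subset_span ⟨∅, Nat.zero_le _, augMonomial_empty b⟩

lemma augMonomialSpan_zero_eq_sup :
    augMonomialSpan b 0 = (ZMod 2 ∙ 1) ⊔ augMonomialSpan b 1 := by
  have h : {S : Finset ι | 0 ≤ S.card} = insert ∅ {S | 1 ≤ S.card} := by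
    ext S
    simp [Finset.one_le_card, or_iff_not_imp_left, Finset.nonempty_iff_ne_empty]
  rw [augMonomialSpan, h, Set.image_insert_eq, augMonomial_empty, Submodule.span_insert]
  rfl

lemma augMonomialSpan_succ_le (q : ℕ) : augMonomialSpan b (q + 1) ≤ augMonomialSpan b q :=
  Submodule.span_mono <| Set.image_mono fun _ hS ↦ Nat.le_of_succ_le hS

lemma augMonomialSpan_eq_bot [Fintype ι] {q : ℕ} (hq : Fintype.card ι < q) :
    augMonomialSpan b q = ⊥ := by
  have hempty : {S : Finset ι | q ≤ S.card} = ∅ :=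
    Set.eq_empty_of_forall_notMem fun S hS ↦ (hq.trans_le hS).not_ge (Finset.card_le_univ S)
  rw [augMonomialSpan, hempty, Set.image_empty, Submodule.span_empty]

end Monomials

section ElementaryAbelian

variable {V ι : Type*} [AddCommGroup V] [Module (ZMod 2) V]

lemma ga_add_one_sq (v : V) : (ga v + 1) ^ 2 = 0 := by
  have hsq : ga v * ga v = 1 := by rw [← ga_add, ZModModule.add_self]; rfl
  calc (ga v + 1) ^ 2 = ga v * ga v + 1 + (ga v + ga v) := by ring
    _ = 0 := by rw [hsq, ZModModule.add_self, ZModModule.add_self, add_zero]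

variable (b : ι → V)

lemma augMonomial_mul_eq_zero {S T : Finset ι} (h : ¬ Disjoint S T) :
    augMonomial b S * augMonomial b T = 0 := by
  classical
  obtain ⟨i, hiS, hiT⟩ := Finset.not_disjoint_iff.mp h
  rw [augMonomial, augMonomial, ← Finset.mul_prod_erase _ _ hiS,
    ← Finset.mul_prod_erase _ _ hiT]
  calc _ = (ga (b i) + 1) ^ 2 *
        ((∏ j ∈ S.erase i, (ga (b j) + 1)) * ∏ j ∈ T.erase i, (ga (b j) + 1)) := by ring
    _ = 0 := by rw [ga_add_one_sq, zero_mul]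

lemma mul_mem_augMonomialSpan {q r : ℕ} {x y : AddMonoidAlgebra (ZMod 2) V}
    (hx : x ∈ augMonomialSpan b q) (hy : y ∈ augMonomialSpan b r) :
    x * y ∈ augMonomialSpan b (q + r) := by
  classical
  induction hx using Submodule.span_induction generalizing y with
  | mem x hx =>
    induction hy using Submodule.span_induction with
    | mem y hy =>
      obtain ⟨S, hS, rfl⟩ := hx
      obtain ⟨T, hT, rfl⟩ := hy
      by_cases hST : Disjoint S T
      · rw [← augMonomial_union b hST]
        refine Submodule.subset_span ⟨S ∪ T, ?_, rfl⟩
        show q + r ≤ (S ∪ T).card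
        rw [Finset.card_union_of_disjoint hST]
        exact Nat.add_le_add hS hT
      · rw [augMonomial_mul_eq_zero b hST]
        exact zero_mem _
    | zero => rw [mul_zero]; exact zero_mem _
    | add y z _ _ hy hz => rw [mul_add]; exact add_mem hy hz
    | smul c y _ hy => rw [mul_smul_comm]; exact Submodule.smul_mem _ _ hy
  | zero => rw [zero_mul]; exact zero_mem _
  | add x z _ _ hx hz => rw [add_mul]; exact add_mem (hx hy) (hz hy)
  | smul c x _ hx => rw [smul_mul_assoc]; exact Submodule.smul_mem _ _ (hx hy)

variable {b}

lemma ga_mem_augMonomialSpan_zero (hb : Submodule.span (ZMod 2) (Set.range b) = ⊤) (v : V) :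
    ga v ∈ augMonomialSpan b 0 := by
  have hv : v ∈ Submodule.span (ZMod 2) (Set.range b) := hb ▸ Submodule.mem_top
  induction hv using Submodule.span_induction with
  | mem v hv =>
    obtain ⟨i, rfl⟩ := hv
    have h : ga (b i) = augMonomial b {i} - 1 := by simp [augMonomial]
    rw [h]
    exact sub_mem (Submodule.subset_span ⟨_, Nat.zero_le _, rfl⟩)
      (one_mem_augMonomialSpan_zero b)
  | zero => rw [ga_zero]; exact one_mem_augMonomialSpan_zero b
  | add v w _ _ hv hw =>
    rw [ga_add, ← zero_add 0]
    exact mul_mem_augMonomialSpan b hv hw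
  | smul c v _ hv =>
    obtain rfl | rfl : c = 0 ∨ c = 1 := by revert c; decide
    · rw [zero_smul, ga_zero]; exact one_mem_augMonomialSpan_zero b
    · rwa [one_smul]

lemma augMonomialSpan_zero (hb : Submodule.span (ZMod 2) (Set.range b) = ⊤) :
    augMonomialSpan b 0 = ⊤ := by
  rw [eq_top_iff, ← span_range_ga, Submodule.span_le]
  rintro _ ⟨v, rfl⟩
  exact ga_mem_augMonomialSpan_zero hb v

lemma restrictScalars_augIdeal (hb : Submodule.span (ZMod 2) (Set.range b) = ⊤) :
    (augIdeal V).restrictScalars (ZMod 2) = augMonomialSpan b 1 := by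
  have hle : augMonomialSpan b 1 ≤ (augIdeal V).restrictScalars (ZMod 2) := by
    simpa using augMonomialSpan_le_augIdeal_pow b 1
  refine le_antisymm (fun x hx ↦ ?_) hle
  have hx0 : x ∈ augMonomialSpan b 0 := by rw [augMonomialSpan_zero hb]; trivial
  rw [augMonomialSpan_zero_eq_sup, Submodule.mem_sup] at hx0
  obtain ⟨_, hc, y, hy, rfl⟩ := hx0
  obtain ⟨c, rfl⟩ := Submodule.mem_span_singleton.mp hc
  have hy' : aug V y = 0 := hle hy
  have hc : c = 0 := by
    have : aug V (c • 1 + y) = 0 := hx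
    simpa [hy'] using this
  rwa [hc, zero_smul, zero_add]

lemma restrictScalars_augIdeal_pow (hb : Submodule.span (ZMod 2) (Set.range b) = ⊤) (q : ℕ) :
    (augIdeal V ^ q).restrictScalars (ZMod 2) = augMonomialSpan b q := by
  refine le_antisymm (fun x hx ↦ ?_) (augMonomialSpan_le_augIdeal_pow b q)
  induction q generalizing x with
  | zero => rw [augMonomialSpan_zero hb]; trivial
  | succ q ih =>
    have hx' : x ∈ augIdeal V ^ q * augIdeal V := by rw [← pow_succ]; exact hx
    refine Submodule.mul_induction_on hx' (fun y hy z hz ↦ ?_) (fun _ _ ↦ add_mem)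
    have hy' : y ∈ augMonomialSpan b q := ih y hy
    have hz' : z ∈ augMonomialSpan b 1 := (restrictScalars_augIdeal hb).le hz
    exact mul_mem_augMonomialSpan b hy' hz'

end ElementaryAbelian

section Dimension

lemma Submodule.finrank_map_mkQ_add_finrank {K M : Type*} [DivisionRing K] [AddCommGroup M]
    [Module K M] {p N : Submodule K M} (h : p ≤ N) [FiniteDimensional K N] :
    Module.finrank K (N.map p.mkQ) + Module.finrank K p = Module.finrank K N := by
  have hrange : LinearMap.range (p.mkQ ∘ₗ N.subtype) = N.map p.mkQ := by
    rw [LinearMap.range_comp, Submodule.range_subtype]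
  have hker : LinearMap.ker (p.mkQ ∘ₗ N.subtype) = p.comap N.subtype := by
    rw [LinearMap.ker_comp, Submodule.ker_mkQ]
  rw [← hrange, ← (Submodule.comapSubtypeEquivOfLe h).finrank_eq, ← hker]
  exact LinearMap.finrank_range_add_finrank_ker _

variable {V ι : Type*} [AddCommGroup V] [Module (ZMod 2) V] [Fintype ι]

lemma card_finset_len_ge_eq_choose_add (q : ℕ) :
    Fintype.card {S : Finset ι // q ≤ S.card} =
      (Fintype.card ι).choose q + Fintype.card {S : Finset ι // q + 1 ≤ S.card} := by
  classical
  simp only [Fintype.card_subtype]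
  rw [← Finset.card_univ, ← Finset.card_powersetCard, ← Finset.univ_filter_card_eq,
    ← Finset.card_union_of_disjoint (Finset.disjoint_filter.mpr fun S _ h ↦ by omega)]
  congr 1
  ext S
  simp only [Finset.mem_filter, Finset.mem_univ, true_and, Finset.mem_union]
  omega

lemma finrank_addMonoidAlgebra_of_basis (b : Module.Basis ι (ZMod 2) V) :
    Module.finrank (ZMod 2) (AddMonoidAlgebra (ZMod 2) V) = 2 ^ Fintype.card ι := by
  rw [Module.finrank_eq_nat_card_basis (AddMonoidAlgebra.basis V (ZMod 2)),
    Nat.card_congr b.equivFun.toEquiv, Nat.card_fun, Nat.card_zmod, Nat.card_eq_fintype_card]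

variable (b : Module.Basis ι (ZMod 2) V)

lemma linearIndependent_augMonomial : LinearIndependent (ZMod 2) (augMonomial b) := by
  refine linearIndependent_of_top_le_span_of_card_eq_finrank ?_ ?_
  · have hall : {S : Finset ι | 0 ≤ S.card} = Set.univ :=
      Set.eq_univ_of_forall fun S ↦ Nat.zero_le _
    have h := augMonomialSpan_zero b.span_eq
    rw [augMonomialSpan, hall, Set.image_univ] at h
    exact h.ge
  · rw [Fintype.card_finset, finrank_addMonoidAlgebra_of_basis b]

lemma finrank_augMonomialSpan (q : ℕ) :
    Module.finrank (ZMod 2) (augMonomialSpan b q) =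
      Fintype.card {S : Finset ι // q ≤ S.card} := by
  rw [augMonomialSpan, Set.image_eq_range]
  exact finrank_span_eq_card
    ((linearIndependent_augMonomial b).comp Subtype.val Subtype.val_injective)

end Dimension

/-- if `dim_{𝔽₂} V = n`, then for every `0 ≤ q ≤ n` the graded piece
`I^q/I^{q+1}` (realised as the image of `I^q` in `𝔽₂[V]/I^{q+1}`) has dimension
`C(n, q)` over `𝔽₂`; moreover `I^{n+1} = 0`. -/
theorem finrank_graded_piece_and_pow_eq_bot {V : Type*} [AddCommGroup V]
    [Module (ZMod 2) V] [Module.Finite (ZMod 2) V] (n : ℕ)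
    (hn : Module.finrank (ZMod 2) V = n) :
    (∀ q : ℕ, q ≤ n →
      Module.finrank (ZMod 2)
        (Submodule.map (Submodule.restrictScalars (ZMod 2) (augIdeal V ^ (q + 1))).mkQ
          (Submodule.restrictScalars (ZMod 2) (augIdeal V ^ q))) = n.choose q) ∧
    augIdeal V ^ (n + 1) = ⊥ := by
  let b := Module.finBasisOfFinrankEq (ZMod 2) V hn
  have hpow := restrictScalars_augIdeal_pow b.span_eq
  have : Finite V := Module.finite_of_finite (ZMod 2)
  have : Module.Finite (ZMod 2) (AddMonoidAlgebra (ZMod 2) V) :=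
    Module.Finite.of_basis (AddMonoidAlgebra.basis V (ZMod 2))
  refine ⟨fun q _ ↦ ?_, ?_⟩
  · have h := Submodule.finrank_map_mkQ_add_finrank (augMonomialSpan_succ_le b q)
    rw [finrank_augMonomialSpan b, finrank_augMonomialSpan b,
      card_finset_len_ge_eq_choose_add q, Fintype.card_fin] at h
    rw [hpow, hpow]
    omega
  · rw [← Submodule.restrictScalars_eq_bot_iff (ZMod 2), hpow]
    exact augMonomialSpan_eq_bot b (by simp)
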